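/- arXiv:2110.08782 — 2 statements merged into one kernel-verified Lean document; each statement's English description precedes it below -/
import Mathlib

section
/- With the setup of the approximate min-plus product: if C_{i,j} = A_{i,k} + B_{k,j} (i.e., k achieves the minimum), then the representative k' of k's block lies in the candidate set K(i',j') = { k' ∈ [n]' : A_{i',k'} + B_{k',j'} ≤ C̃_{i',j'} + 8δm }. -/
/-- A matrix (as a function on `Fin n`) is `δ`-bounded-difference if entries at
adjacent positions (differing by 1 in one coordinate) differ by at most `δ`. -/
def BDiff {n : ℕ} (δ : ℤ) (A : Fin n → Fin n → ℤ) : Prop :=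
  ∀ i j i' j' : Fin n,
    ((i'.val = i.val + 1 ∧ j' = j) ∨ (i' = i ∧ j'.val = j.val + 1)) →
    |A i' j' - A i j| ≤ δ

/-- Representative (first element) of the length-`m` block containing `i`. -/
def rep {n : ℕ} (m : ℕ) (i : Fin n) : Fin n :=
  ⟨m * (i.val / m),
    lt_of_le_of_lt (by rw [Nat.mul_comm]; exact Nat.div_mul_le_self _ _) i.isLt⟩

/-- Min-plus product `C = A ⋆ B`. -/
def minplus {n : ℕ} (A B : Fin n → Fin n → ℤ) (i j : Fin n) : ℤ :=
  Finset.inf' Finset.univ ⟨i, Finset.mem_univ i⟩ (fun k => A i k + B k j)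

/-- Block-approximate min-plus product: minimum over representative indices. -/
def Ctil {n : ℕ} (m : ℕ) (A B : Fin n → Fin n → ℤ) (i j : Fin n) : ℤ :=
  Finset.inf' ((Finset.univ : Finset (Fin n)).filter fun k => m ∣ k.val)
    ⟨⟨0, i.pos⟩, by simp⟩ (fun k => A (rep m i) k + B k (rep m j))

/-- Candidate set `K(i',j')`. -/
def Kset {n : ℕ} (m : ℕ) (δ : ℤ) (A B : Fin n → Fin n → ℤ) (i j : Fin n) :
    Finset (Fin n) :=
  Finset.univ.filter
    (fun k => m ∣ k.val ∧
      A (rep m i) k + B k (rep m j) ≤ Ctil m A B i j + 8 * δ * m)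

/-!
Moving the three indices of a term `A i k + B k j` to their block representatives takes four
moves (row and column of `A`, row and column of `B`), each across fewer than `m` adjacent
entries, so the term changes by at most `4δm`. Apply this to the minimiser `k` of `C i j` and
to the minimiser `k₀` of `C̃ i' j'`, which is its own representative; together with
`C i j ≤ A i k₀ + B k₀ j` the two errors add up to `8δm`.
-/

lemma abs_sub_le_of_abs_succ_sub_le {n : ℕ} {δ : ℤ} (f : Fin n → ℤ)
    (hf : ∀ a b : Fin n, b.val = a.val + 1 → |f b - f a| ≤ δ) (d : ℕ) :
    ∀ a b : Fin n, b.val = a.val + d → |f b - f a| ≤ δ * d := by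
  induction d with
  | zero =>
    intro a b hab
    simp [Fin.ext (by omega : b.val = a.val)]
  | succ d ih =>
    intro a b hab
    let c : Fin n := ⟨a.val + d, by omega⟩
    calc |f b - f a| = |(f b - f c) + (f c - f a)| := by rw [sub_add_sub_cancel]
      _ ≤ |f b - f c| + |f c - f a| := abs_add_le _ _
      _ ≤ δ + δ * d := add_le_add (hf c b (by simp [c]; omega)) (ih a c rfl)
      _ = δ * ↑(d + 1) := by push_cast; ring

namespace BDiff

variable {n : ℕ} {δ : ℤ} {A : Fin n → Fin n → ℤ}

lemma transpose (hA : BDiff δ A) : BDiff δ (fun i j => A j i) := by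
  intro i j i' j' h
  exact hA j i j' i' (h.symm.imp (fun ⟨h₁, h₂⟩ => ⟨h₂, h₁⟩) (fun ⟨h₁, h₂⟩ => ⟨h₂, h₁⟩))

lemma abs_sub_le_row (hA : BDiff δ A) {i i' : Fin n} {d : ℕ} (h : i'.val = i.val + d)
    (j : Fin n) : |A i' j - A i j| ≤ δ * d :=
  abs_sub_le_of_abs_succ_sub_le (fun i => A i j)
    (fun a b hab => hA a j b j (Or.inl ⟨hab, rfl⟩)) d i i' h

lemma abs_sub_le_col (hA : BDiff δ A) (i : Fin n) {j j' : Fin n} {d : ℕ}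
    (h : j'.val = j.val + d) : |A i j' - A i j| ≤ δ * d :=
  hA.transpose.abs_sub_le_row h i

end BDiff

section Blocks

variable {n m : ℕ}

lemma rep_val_add_mod (x : Fin n) : x.val = (rep m x).val + x.val % m :=
  (Nat.div_add_mod x.val m).symm

lemma dvd_rep_val (x : Fin n) : m ∣ (rep m x).val :=
  Dvd.intro _ rfl

lemma rep_eq_self {x : Fin n} (h : m ∣ x.val) : rep m x = x :=
  Fin.ext (Nat.mul_div_cancel' h)

variable {δ : ℤ} {A B : Fin n → Fin n → ℤ}

lemma BDiff.abs_sub_rep_row_le (hA : BDiff δ A) (hδ : 0 ≤ δ) (hm : 0 < m) (x y : Fin n) :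
    |A x y - A (rep m x) y| ≤ δ * m :=
  (hA.abs_sub_le_row (rep_val_add_mod x) y).trans
    (mul_le_mul_of_nonneg_left (by exact_mod_cast (Nat.mod_lt _ hm).le) hδ)

lemma BDiff.abs_sub_rep_col_le (hA : BDiff δ A) (hδ : 0 ≤ δ) (hm : 0 < m) (x y : Fin n) :
    |A x y - A x (rep m y)| ≤ δ * m :=
  hA.transpose.abs_sub_rep_row_le hδ hm y x

lemma abs_sub_rep_add_le (hA : BDiff δ A) (hB : BDiff δ B) (hδ : 0 ≤ δ) (hm : 0 < m)
    (x y t : Fin n) :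
    |A (rep m x) (rep m t) + B (rep m t) (rep m y) - (A x t + B t y)| ≤ 4 * δ * m := by
  have h₁ := abs_le.mp (hA.abs_sub_rep_row_le hδ hm x t)
  have h₂ := abs_le.mp (hA.abs_sub_rep_col_le hδ hm (rep m x) t)
  have h₃ := abs_le.mp (hB.abs_sub_rep_row_le hδ hm t y)
  have h₄ := abs_le.mp (hB.abs_sub_rep_col_le hδ hm (rep m t) y)
  rw [abs_le]
  constructor <;> linarith

end Blocks

lemma minplus_le {n : ℕ} (A B : Fin n → Fin n → ℤ) (i j k : Fin n) :
    minplus A B i j ≤ A i k + B k j :=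
  Finset.inf'_le _ (Finset.mem_univ k)

lemma exists_Ctil_eq {n : ℕ} (m : ℕ) (A B : Fin n → Fin n → ℤ) (i j : Fin n) :
    ∃ k, m ∣ k.val ∧ Ctil m A B i j = A (rep m i) k + B k (rep m j) := by
  obtain ⟨k, hk, hmin⟩ := Finset.exists_mem_eq_inf' (⟨⟨0, i.pos⟩, by simp⟩ :
    ((Finset.univ : Finset (Fin n)).filter fun k => m ∣ k.val).Nonempty)
    (fun k => A (rep m i) k + B k (rep m j))
  exact ⟨k, (Finset.mem_filter.mp hk).2, hmin⟩

/-- if `k` achieves the minimum `C_{i,j} = A_{i,k} + B_{k,j}`, then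
the representative of `k`'s block lies in the candidate set `K(i',j')`. -/
theorem stmt4 {n : ℕ} (δ : ℤ) (hδ : 0 < δ) (A B : Fin n → Fin n → ℤ)
    (hA : BDiff δ A) (hB : BDiff δ B) (m : ℕ) (hm : m ∣ n) (i j k : Fin n)
    (hk : minplus A B i j = A i k + B k j) :
    rep m k ∈ Kset m δ A B i j := by
  have hm₀ : 0 < m := Nat.pos_of_dvd_of_pos hm i.pos
  obtain ⟨k₀, hk₀, hCtil⟩ := exists_Ctil_eq m A B i j
  have hk_err := abs_le.mp (abs_sub_rep_add_le hA hB hδ.le hm₀ i j k)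
  have hk₀_err := abs_le.mp (abs_sub_rep_add_le hA hB hδ.le hm₀ i j k₀)
  rw [rep_eq_self hk₀] at hk₀_err
  have hmin := hk ▸ minplus_le A B i j k₀
  simp only [Kset, Finset.mem_filter, Finset.mem_univ, true_and]
  exact ⟨dvd_rep_val k, by linarith⟩
end

section
/- Define A^r_{i,k} = A_{i,k} - A_{i,r} and B^r_{k,j} = B_{k,j} - B_{r,j}. If k' ∈ K(i',j') and r' ∈ K(i',j') (where r is a representative index, r = r'), then |A^r_{i,k} + B^r_{k,j}| ≤ 16δm. -/
variable {n : ℕ} {δ : ℤ}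

theorem BDiff.transpose_s7 {A : Fin n → Fin n → ℤ} (hA : BDiff δ A) :
    BDiff δ (fun i j => A j i) := by
  intro i j i' j' h
  exact hA j i j' i' (h.symm.imp And.symm And.symm)

theorem BDiff.abs_sub_le_of_val_eq_add {A : Fin n → Fin n → ℤ} (hA : BDiff δ A)
    (j a : Fin n) {b : Fin n} (d : ℕ) (h : b.val = a.val + d) :
    |A b j - A a j| ≤ δ * d := by
  induction d generalizing b with
  | zero => simp [Fin.ext (a := b) (b := a) (by omega)]
  | succ d ih =>
    let c : Fin n := ⟨a.val + d, by omega⟩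
    have hstep : |A b j - A c j| ≤ δ := hA c j b j (Or.inl ⟨by simp [c, h]; omega, rfl⟩)
    calc |A b j - A a j| ≤ |A b j - A c j| + |A c j - A a j| := abs_sub_le _ _ _
      _ ≤ δ + δ * d := add_le_add hstep (ih rfl)
      _ = δ * ((d + 1 : ℕ) : ℤ) := by push_cast; ring

theorem val_eq_rep_val_add_mod (m : ℕ) (i : Fin n) : i.val = (rep m i).val + i.val % m :=
  (Nat.div_add_mod i.val m).symm

theorem BDiff.abs_sub_rep_left_le {A : Fin n → Fin n → ℤ} (hA : BDiff δ A) (hδ : 0 ≤ δ)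
    {m : ℕ} (hm : 0 < m) (i j : Fin n) : |A i j - A (rep m i) j| ≤ δ * m := by
  refine (hA.abs_sub_le_of_val_eq_add j (rep m i) _ (val_eq_rep_val_add_mod m i)).trans ?_
  exact mul_le_mul_of_nonneg_left (by exact_mod_cast (Nat.mod_lt _ hm).le) hδ

theorem BDiff.abs_sub_rep_right_le {A : Fin n → Fin n → ℤ} (hA : BDiff δ A) (hδ : 0 ≤ δ)
    {m : ℕ} (hm : 0 < m) (i j : Fin n) : |A i j - A i (rep m j)| ≤ δ * m :=
  hA.transpose_s7.abs_sub_rep_left_le hδ hm j i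

theorem Ctil_le {m : ℕ} (A B : Fin n → Fin n → ℤ) (i j : Fin n) {k : Fin n}
    (hk : m ∣ k.val) : Ctil m A B i j ≤ A (rep m i) k + B k (rep m j) :=
  Finset.inf'_le (fun k => A (rep m i) k + B k (rep m j))
    (Finset.mem_filter.mpr ⟨Finset.mem_univ k, hk⟩)

theorem abs_sub_le_of_mem_Kset {m : ℕ} {A B : Fin n → Fin n → ℤ} {i j k r : Fin n}
    (hk : k ∈ Kset m δ A B i j) (hr : r ∈ Kset m δ A B i j) :
    |(A (rep m i) k + B k (rep m j)) - (A (rep m i) r + B r (rep m j))| ≤ 8 * δ * m := by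
  obtain ⟨-, hkm, hk⟩ := Finset.mem_filter.mp hk
  obtain ⟨-, hrm, hr⟩ := Finset.mem_filter.mp hr
  have := Ctil_le A B i j hkm
  have := Ctil_le A B i j hrm
  rw [abs_le]
  constructor <;> linarith

theorem stmt7_general {n : ℕ} (δ : ℤ) (hδ : 0 < δ) (A B : Fin n → Fin n → ℤ)
    (hA : BDiff δ A) (hB : BDiff δ B) (m : ℕ) (hm : m ∣ n) (i j k r : Fin n)
    (hkK : rep m k ∈ Kset m δ A B i j) (hrK : r ∈ Kset m δ A B i j) :
    |(A i k - A i r) + (B k j - B r j)| ≤ 16 * δ * m := by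
  have hm0 : 0 < m := Nat.pos_of_dvd_of_pos hm i.pos
  set i' := rep m i
  set j' := rep m j
  set k' := rep m k
  have h1 := hA.abs_sub_rep_left_le hδ.le hm0 i k
  have h2 := hA.abs_sub_rep_right_le hδ.le hm0 i' k
  have h3 := hA.abs_sub_rep_left_le hδ.le hm0 i r
  have h4 := hB.abs_sub_rep_right_le hδ.le hm0 k j
  have h5 := hB.abs_sub_rep_left_le hδ.le hm0 k j'
  have h6 := hB.abs_sub_rep_right_le hδ.le hm0 r j
  have hK := abs_sub_le_of_mem_Kset hkK hrK
  have hδm : 0 ≤ δ * m := by positivity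
  rw [abs_le] at *
  constructor <;> linarith

/-- for `A^r_{i,k} = A_{i,k} - A_{i,r}`, `B^r_{k,j} = B_{k,j} - B_{r,j}`,
if the representative `k'` of `k` and the representative index `r` both lie in
`K(i',j')`, then `|A^r_{i,k} + B^r_{k,j}| ≤ 16δm`. -/
theorem stmt7 {n : ℕ} (δ : ℤ) (hδ : 0 < δ) (A B : Fin n → Fin n → ℤ)
    (hA : BDiff δ A) (hB : BDiff δ B) (m : ℕ) (hm : m ∣ n) (i j k r : Fin n)
    (hr : m ∣ r.val)
    (hkK : rep m k ∈ Kset m δ A B i j) (hrK : r ∈ Kset m δ A B i j) :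
    |(A i k - A i r) + (B k j - B r j)| ≤ 16 * δ * m :=
  stmt7_general δ hδ A B hA hB m hm i j k r hkK hrK
end
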